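/- Let u₁ ~ N(0, σ₁²) and u₂ ~ N(0, σ₂²) be independent with σ₁ ≥ σ₂ > 0. Then R = √(u₁² + u₂²) has density f_R(r) = ((1+q²)/(q Ω)) r exp(−((1+q²)²/(4 q² Ω)) r²) I₀(((1−q⁴)/(4 q² Ω)) r²) for r > 0, where q = σ₂/σ₁, Ω = σ₁² + σ₂², and I₀ is the modified Bessel function of the first kind of order zero. -/

import Mathlib

open Real MeasureTheory ProbabilityTheory

/-- The modified Bessel function of the first kind of order zero,
`I₀(x) = (1/π) ∫₀^π e^{x cos φ} dφ`. -/
noncomputable def besselI0 (x : ℝ) : ℝ :=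
  (1 / π) * ∫ φ in (0:ℝ)..π, Real.exp (x * Real.cos φ)

/-!
By independence, `(u₁, u₂)` has density `(2πσ₁σ₂)⁻¹ exp(-x²/(2σ₁²) - y²/(2σ₂²))`. In polar
coordinates the exponent is `-a r² + b r² cos 2θ` with `a = (σ₁⁻² + σ₂⁻²)/4` and
`b = (σ₂⁻² - σ₁⁻²)/4`. As `θ` runs over `(-π, π)`, `2θ` covers two periods of the even function
`cos`, so integrating out the angle gives `2π I₀(b r²)`, and the radius has density
`r/(σ₁σ₂) e^{-a r²} I₀(b r²)`. In terms of `q` and `Ω` these coefficients are those of the Hoyt law.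
-/

open Set
open scoped ENNReal

section

variable {E : Type*} [NormedAddCommGroup E] [NormedSpace ℝ E]

theorem Function.Periodic.intervalIntegral_comp_nat_mul {f : ℝ → E} {T : ℝ}
    (hf : Function.Periodic f T) (h_int : ∀ t₁ t₂, IntervalIntegrable f volume t₁ t₂)
    {n : ℕ} (hn : n ≠ 0) (t : ℝ) :
    ∫ x in t..t + T, f (n * x) = ∫ x in t..t + T, f x := by
  have hn' : (n : ℝ) ≠ 0 := Nat.cast_ne_zero.mpr hn
  rw [intervalIntegral.integral_comp_mul_left f hn', mul_add,
    show (n : ℝ) * T = (n : ℤ) • T by simp, hf.intervalIntegral_add_zsmul_eq _ _ h_int,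
    hf.intervalIntegral_add_eq _ t, ← Int.cast_smul_eq_zsmul ℝ, Int.cast_natCast,
    inv_smul_smul₀ hn']

theorem intervalIntegral.integral_neg_self_eq_two_smul_of_even {f : ℝ → E}
    (hf : ∀ x, f (-x) = f x) {a : ℝ} (h_int : IntervalIntegrable f volume (-a) a) :
    ∫ x in -a..a, f x = 2 • ∫ x in 0..a, f x := by
  have h_zero : (0 : ℝ) ∈ uIcc (-a) a := by
    rw [mem_uIcc]; rcases le_total 0 a with h | h <;> [left; right] <;> constructor <;> linarith
  rw [← intervalIntegral.integral_add_adjacent_intervals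
    (h_int.mono_set (uIcc_subset_uIcc_left h_zero))
    (h_int.mono_set (uIcc_subset_uIcc_right h_zero)), two_nsmul]
  congr 1
  simpa [hf] using (intervalIntegral.integral_comp_neg (a := 0) (b := a) f).symm

end

theorem integral_exp_mul_cos_two_mul (b : ℝ) :
    ∫ θ in (-π)..π, exp (b * cos (2 * θ)) = 2 * π * besselI0 b := by
  have hcont : Continuous fun u => exp (b * cos u) := by fun_prop
  have hper : Function.Periodic (fun u => exp (b * cos u)) (2 * π) := fun u => by
    simp only [cos_add_two_pi]
  have h := hper.intervalIntegral_comp_nat_mul (fun _ _ => hcont.intervalIntegrable _ _)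
    two_ne_zero (-π)
  rw [show -π + 2 * π = π by ring] at h
  push_cast at h
  rw [h, intervalIntegral.integral_neg_self_eq_two_smul_of_even (fun u => by simp only [cos_neg])
    (hcont.intervalIntegrable _ _), nsmul_eq_mul, Nat.cast_ofNat, besselI0]
  field_simp

theorem lintegral_exp_mul_cos_two_mul (b : ℝ) :
    ∫⁻ θ in Ioo (-π) π, ENNReal.ofReal (exp (b * cos (2 * θ)))
      = ENNReal.ofReal (2 * π * besselI0 b) := by
  have hint : IntegrableOn (fun θ => exp (b * cos (2 * θ))) (Ioo (-π) π) :=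
    (Continuous.integrableOn_Icc (by fun_prop)).mono_set Ioo_subset_Icc_self
  rw [← ofReal_integral_eq_lintegral_ofReal hint (ae_of_all _ fun θ => (exp_pos _).le),
    ← integral_Ioc_eq_integral_Ioo,
    ← intervalIntegral.integral_of_le (by linarith [pi_pos] : -π ≤ π),
    integral_exp_mul_cos_two_mul]

theorem map_sqrt_sq_add_sq_withDensity {f : ℝ × ℝ → ℝ≥0∞} (hf : Measurable f) :
    (volume.withDensity f).map (fun p : ℝ × ℝ => √(p.1 ^ 2 + p.2 ^ 2)) =
      volume.withDensity ((Ioi 0).indicator fun r =>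
        ENNReal.ofReal r * ∫⁻ θ in Ioo (-π) π, f (polarCoord.symm (r, θ))) := by
  set g : ℝ × ℝ → ℝ := fun p => √(p.1 ^ 2 + p.2 ^ 2)
  have hg : Measurable g := by fun_prop
  have hg_polar : ∀ r θ, 0 < r → g (polarCoord.symm (r, θ)) = r := fun r θ hr => by
    simp only [g, polarCoord_symm_apply, mul_pow, ← mul_add, cos_sq_add_sin_sq, mul_one,
      sqrt_sq hr.le]
  ext s hs
  have h_meas : Measurable fun p : ℝ × ℝ =>
      ENNReal.ofReal p.1 • (g ⁻¹' s).indicator f (polarCoord.symm p) :=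
    (ENNReal.measurable_ofReal.comp measurable_fst).smul
      ((hf.indicator (hg hs)).comp continuous_polarCoord_symm.measurable)
  rw [Measure.map_apply hg hs, withDensity_apply _ (hg hs), withDensity_apply _ hs,
    ← lintegral_indicator (hg hs), ← lintegral_comp_polarCoord_symm, polarCoord_target,
    Measure.volume_eq_prod, setLIntegral_prod _ h_meas.aemeasurable]
  calc _ = ∫⁻ r in Ioi 0, s.indicator
          (fun r => ENNReal.ofReal r * ∫⁻ θ in Ioo (-π) π, f (polarCoord.symm (r, θ))) r := by
        refine setLIntegral_congr_fun measurableSet_Ioi fun r hr => ?_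
        have hmem : ∀ θ, polarCoord.symm (r, θ) ∈ g ⁻¹' s ↔ r ∈ s := fun θ => by
          rw [mem_preimage, hg_polar r θ hr]
        by_cases hrs : r ∈ s
        · rw [indicator_of_mem hrs, ← lintegral_const_mul' _ _ ENNReal.ofReal_ne_top]
          refine lintegral_congr fun θ => ?_
          rw [smul_eq_mul, indicator_of_mem ((hmem θ).2 hrs)]
        · rw [indicator_of_notMem hrs, ← lintegral_zero]
          refine lintegral_congr fun θ => ?_
          rw [indicator_of_notMem (mt (hmem θ).1 hrs), smul_zero]
    _ = _ := by
        rw [lintegral_indicator hs, lintegral_indicator measurableSet_Ioi,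
          Measure.restrict_restrict hs, Measure.restrict_restrict measurableSet_Ioi, inter_comm]

theorem gaussianPDFReal_mul_gaussianPDFReal_polar {σ₁ σ₂ : ℝ} (hσ₁ : 0 < σ₁) (hσ₂ : 0 < σ₂)
    (r θ : ℝ) :
    gaussianPDFReal 0 (σ₁ ^ 2).toNNReal (r * cos θ) *
        gaussianPDFReal 0 (σ₂ ^ 2).toNNReal (r * sin θ) =
      (2 * π * σ₁ * σ₂)⁻¹ * exp (-(1 / (4 * σ₁ ^ 2) + 1 / (4 * σ₂ ^ 2)) * r ^ 2) *
        exp ((1 / (4 * σ₂ ^ 2) - 1 / (4 * σ₁ ^ 2)) * r ^ 2 * cos (2 * θ)) := by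
  have h_norm : √(2 * π * σ₁ ^ 2) * √(2 * π * σ₂ ^ 2) = 2 * π * σ₁ * σ₂ := by
    rw [← sqrt_mul (by positivity), show 2 * π * σ₁ ^ 2 * (2 * π * σ₂ ^ 2)
      = (2 * π * σ₁ * σ₂) ^ 2 by ring, sqrt_sq (by positivity)]
  have h_exp : -(r * cos θ - 0) ^ 2 / (2 * σ₁ ^ 2) + -(r * sin θ - 0) ^ 2 / (2 * σ₂ ^ 2) =
      -(1 / (4 * σ₁ ^ 2) + 1 / (4 * σ₂ ^ 2)) * r ^ 2 +
        (1 / (4 * σ₂ ^ 2) - 1 / (4 * σ₁ ^ 2)) * r ^ 2 * cos (2 * θ) := by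
    rw [sub_zero, sub_zero, mul_pow, mul_pow, sin_sq, cos_two_mul]
    field_simp
    ring
  simp only [gaussianPDFReal, Real.coe_toNNReal _ (sq_nonneg _)]
  rw [mul_mul_mul_comm, ← mul_inv, h_norm, ← exp_add, h_exp, exp_add]
  ring

theorem map_sqrt_sq_add_sq_gaussianReal_prod {σ₁ σ₂ : ℝ} (hσ₁ : 0 < σ₁) (hσ₂ : 0 < σ₂) :
    ((gaussianReal 0 (σ₁ ^ 2).toNNReal).prod (gaussianReal 0 (σ₂ ^ 2).toNNReal)).map
        (fun p : ℝ × ℝ => √(p.1 ^ 2 + p.2 ^ 2)) =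
      volume.withDensity fun r => ENNReal.ofReal (if 0 < r then
        1 / (σ₁ * σ₂) * r * exp (-(1 / (4 * σ₁ ^ 2) + 1 / (4 * σ₂ ^ 2)) * r ^ 2) *
          besselI0 ((1 / (4 * σ₂ ^ 2) - 1 / (4 * σ₁ ^ 2)) * r ^ 2) else 0) := by
  have hv : ∀ σ : ℝ, 0 < σ → (σ ^ 2).toNNReal ≠ 0 := fun σ hσ => by
    simpa using hσ.ne'
  rw [gaussianReal_of_var_ne_zero 0 (hv σ₁ hσ₁), gaussianReal_of_var_ne_zero 0 (hv σ₂ hσ₂),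
    prod_withDensity (measurable_gaussianPDF _ _) (measurable_gaussianPDF _ _),
    ← Measure.volume_eq_prod, map_sqrt_sq_add_sq_withDensity (by fun_prop)]
  set a : ℝ := 1 / (4 * σ₁ ^ 2) + 1 / (4 * σ₂ ^ 2)
  set b : ℝ := 1 / (4 * σ₂ ^ 2) - 1 / (4 * σ₁ ^ 2)
  congr 1
  funext r
  by_cases hr : 0 < r
  · have h_polar : ∀ θ, gaussianPDF 0 (σ₁ ^ 2).toNNReal (polarCoord.symm (r, θ)).1 *
        gaussianPDF 0 (σ₂ ^ 2).toNNReal (polarCoord.symm (r, θ)).2 =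
        ENNReal.ofReal ((2 * π * σ₁ * σ₂)⁻¹ * exp (-a * r ^ 2)) *
          ENNReal.ofReal (exp (b * r ^ 2 * cos (2 * θ))) := fun θ => by
      rw [polarCoord_symm_apply, gaussianPDF, gaussianPDF,
        ← ENNReal.ofReal_mul (gaussianPDFReal_nonneg _ _ _),
        gaussianPDFReal_mul_gaussianPDFReal_polar hσ₁ hσ₂, ENNReal.ofReal_mul (by positivity)]
    rw [indicator_of_mem (mem_Ioi.2 hr), if_pos hr, lintegral_congr h_polar,
      lintegral_const_mul' _ _ ENNReal.ofReal_ne_top, lintegral_exp_mul_cos_two_mul,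
      ← ENNReal.ofReal_mul (by positivity), ← ENNReal.ofReal_mul hr.le]
    congr 1
    field_simp
  · rw [indicator_of_notMem (mt mem_Ioi.1 hr), if_neg hr, ENNReal.ofReal_zero]

/-- Hoyt distribution: the norm `√(u₁² + u₂²)` of two independent centered
Gaussians with `σ₁ ≥ σ₂ > 0` has the Hoyt density. -/
theorem hoyt_density
    {Ω : Type*} [MeasurableSpace Ω] (P : Measure Ω) [IsProbabilityMeasure P]
    (u₁ u₂ : Ω → ℝ) (σ₁ σ₂ : ℝ) (hσ₂ : 0 < σ₂) (hσ : σ₂ ≤ σ₁)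
    (hindep : IndepFun u₁ u₂ P)
    (h₁ : Measure.map u₁ P = gaussianReal 0 (Real.toNNReal (σ₁ ^ 2)))
    (h₂ : Measure.map u₂ P = gaussianReal 0 (Real.toNNReal (σ₂ ^ 2))) :
    let q : ℝ := σ₂ / σ₁
    let Ω' : ℝ := σ₁ ^ 2 + σ₂ ^ 2
    Measure.map (fun ω => Real.sqrt ((u₁ ω) ^ 2 + (u₂ ω) ^ 2)) P
      = volume.withDensity (fun r : ℝ =>
          ENNReal.ofReal (if 0 < r then
            ((1 + q ^ 2) / (q * Ω')) * r * Real.exp (-((1 + q ^ 2) ^ 2 / (4 * q ^ 2 * Ω')) * r ^ 2)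
              * besselI0 (((1 - q ^ 4) / (4 * q ^ 2 * Ω')) * r ^ 2)
          else 0)) := by
  intro q Ω'
  have hσ₁ : 0 < σ₁ := hσ₂.trans_le hσ
  have hu₁ : AEMeasurable u₁ P := .of_map_ne_zero (h₁ ▸ IsProbabilityMeasure.ne_zero _)
  have hu₂ : AEMeasurable u₂ P := .of_map_ne_zero (h₂ ▸ IsProbabilityMeasure.ne_zero _)
  have h_joint : P.map (fun ω => (u₁ ω, u₂ ω)) =
      (gaussianReal 0 (σ₁ ^ 2).toNNReal).prod (gaussianReal 0 (σ₂ ^ 2).toNNReal) := by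
    rw [← h₁, ← h₂]
    exact (indepFun_iff_map_prod_eq_prod_map_map hu₁ hu₂).mp hindep
  have h_norm : Measurable fun p : ℝ × ℝ => √(p.1 ^ 2 + p.2 ^ 2) := by fun_prop
  have h_amp : (1 + q ^ 2) / (q * Ω') = 1 / (σ₁ * σ₂) := by
    simp only [q, Ω']; field_simp
  have h_decay : (1 + q ^ 2) ^ 2 / (4 * q ^ 2 * Ω') = 1 / (4 * σ₁ ^ 2) + 1 / (4 * σ₂ ^ 2) := by
    simp only [q, Ω']; field_simp; ring
  have h_bessel : (1 - q ^ 4) / (4 * q ^ 2 * Ω') = 1 / (4 * σ₂ ^ 2) - 1 / (4 * σ₁ ^ 2) := by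
    simp only [q, Ω']; field_simp; ring
  rw [h_amp, h_decay, h_bessel, ← map_sqrt_sq_add_sq_gaussianReal_prod hσ₁ hσ₂, ← h_joint,
    AEMeasurable.map_map_of_aemeasurable h_norm.aemeasurable (hu₁.prodMk hu₂)]
  rfl
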